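/- Let (R, 𝔪) be a Noetherian local ring and let f, g ∈ 𝔪 be a regular sequence on R. Then the commutative square of canonical localization homomorphisms R → R[1/f], R → R[1/g], R[1/f] → R[1/(fg)], R[1/g] → R[1/(fg)] is a pullback square of commutative rings; equivalently, the canonical map from R to the fiber product {(a, b) ∈ R[1/f] × R[1/g] : a and b have the same image in R[1/(fg)]} is a ring isomorphism. -/

import Mathlib

/-- `f, g` is a regular sequence on `R`: `f` is a non-zerodivisor on `R` and the image of `g`
in `R ⧸ (f)` is a non-zerodivisor on `R ⧸ (f)`. -/
def IsRegularPair {R : Type*} [CommRing R] (f g : R) : Prop :=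
  f ∈ nonZeroDivisors R ∧
    Ideal.Quotient.mk (Ideal.span {f}) g ∈ nonZeroDivisors (R ⧸ Ideal.span {f})

section Aux
variable {R : Type*} [CommRing R]

lemma regpair_dvd {f g : R} (hreg : IsRegularPair f g) :
    ∀ x : R, f ∣ g * x → f ∣ x := by
  intro x hx
  have h1 : (Ideal.Quotient.mk (Ideal.span {f})) (g * x) = 0 := by
    rw [Ideal.Quotient.eq_zero_iff_mem, Ideal.mem_span_singleton]; exact hx
  rw [map_mul] at h1
  have h2 := mem_nonZeroDivisors_iff_right.mp hreg.2 _ (by rw [mul_comm]; exact h1)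
  rwa [Ideal.Quotient.eq_zero_iff_mem, Ideal.mem_span_singleton] at h2

lemma dvd_of_dvd_powmul {f g : R} (hg : ∀ x : R, f ∣ g * x → f ∣ x) :
    ∀ (N : ℕ) (x : R), f ∣ g ^ N * x → f ∣ x := by
  intro N
  induction N with
  | zero => intro x hx; simpa using hx
  | succ n ih =>
    intro x hx
    refine ih x (hg _ ?_)
    rw [pow_succ, mul_assoc, mul_comm g x, ← mul_assoc] at hx
    rwa [mul_comm g (g ^ n * x), mul_assoc] at *

lemma pow_dvd_of_dvd_mul {f h : R} (hf : f ∈ nonZeroDivisors R)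
    (hh : ∀ x : R, f ∣ h * x → f ∣ x) :
    ∀ (N : ℕ) (x : R), f ^ N ∣ h * x → f ^ N ∣ x := by
  intro N
  induction N with
  | zero => intro x _; simpa using one_dvd x
  | succ n ih =>
    intro x hx
    obtain ⟨y, hy⟩ := hx
    obtain ⟨x₁, hx₁⟩ := hh x ((dvd_pow_self f (Nat.succ_ne_zero n)).trans ⟨y, hy⟩)
    subst hx₁
    have h2 : f * (h * x₁) = f * (f ^ n * y) := by linear_combination hy
    have h3 : h * x₁ = f ^ n * y := (mul_cancel_left_mem_nonZeroDivisors hf).mp h2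
    obtain ⟨z, hz⟩ := ih x₁ ⟨y, h3⟩
    exact ⟨z, by rw [hz]; ring⟩

lemma key_decomp {f g : R} (hreg : IsRegularPair f g) (N : ℕ) (X Y : R)
    (hXY : X * g ^ N = Y * f ^ N) : ∃ r : R, X = r * f ^ N ∧ Y = r * g ^ N := by
  have hgN : ∀ x : R, f ∣ g ^ N * x → f ∣ x :=
    fun x hx => dvd_of_dvd_powmul (regpair_dvd hreg) N x hx
  have h1 : f ^ N ∣ g ^ N * X := ⟨Y, by linear_combination hXY⟩
  obtain ⟨r, hr⟩ := pow_dvd_of_dvd_mul hreg.1 hgN N X h1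
  have hfN : f ^ N ∈ nonZeroDivisors R := pow_mem hreg.1 N
  have h2 : f ^ N * Y = f ^ N * (r * g ^ N) := by linear_combination g ^ N * hr - hXY
  exact ⟨r, by rw [hr]; ring, (mul_cancel_left_mem_nonZeroDivisors hfN).mp h2⟩

end Aux

/-- Let `(R, 𝔪)` be a Noetherian local ring and let `f, g ∈ 𝔪` be a regular
sequence on `R`. Then the square of canonical localization maps
`R → R[1/f]`, `R → R[1/g]`, `R[1/f] → R[1/fg]`, `R[1/g] → R[1/fg]` is a pullback square of
commutative rings: the canonical ring homomorphism from `R` to the fiber product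
`{(a, b) ∈ R[1/f] × R[1/g] | a, b have the same image in R[1/fg]}` is a ring isomorphism
(being a ring homomorphism, we state that it is bijective). -/
theorem statement2 {R : Type*} [CommRing R] [IsNoetherianRing R] [IsLocalRing R]
    (f g : R) (hfm : f ∈ IsLocalRing.maximalIdeal R) (hgm : g ∈ IsLocalRing.maximalIdeal R)
    (hreg : IsRegularPair f g)
    {Rf Rg Rfg : Type*} [CommRing Rf] [CommRing Rg] [CommRing Rfg]
    [Algebra R Rf] [Algebra R Rg] [Algebra R Rfg]
    [IsLocalization.Away f Rf] [IsLocalization.Away g Rg] [IsLocalization.Away (f * g) Rfg]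
    (φf : Rf →+* Rfg) (φg : Rg →+* Rfg)
    (hφf : φf.comp (algebraMap R Rf) = algebraMap R Rfg)
    (hφg : φg.comp (algebraMap R Rg) = algebraMap R Rfg) :
    Function.Bijective
      (RingHom.codRestrict ((algebraMap R Rf).prod (algebraMap R Rg))
        (RingHom.eqLocus (φf.comp (RingHom.fst Rf Rg)) (φg.comp (RingHom.snd Rf Rg)))
        (fun r => show φf (algebraMap R Rf r) = φg (algebraMap R Rg r) from
          (RingHom.congr_fun hφf r).trans (RingHom.congr_fun hφg r).symm)) := by
  constructor
  · rw [injective_iff_map_eq_zero]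
    intro r hr
    have h1 : algebraMap R Rf r = 0 := by
      have h0 := Subtype.ext_iff.mp hr
      exact (Prod.ext_iff.mp h0).1
    obtain ⟨m, hm⟩ := (IsLocalization.map_eq_zero_iff (Submonoid.powers f) Rf r).mp h1
    obtain ⟨n, hn⟩ := m.2
    have hfn : (f : R) ^ n ∈ nonZeroDivisors R := pow_mem hreg.1 n
    exact mem_nonZeroDivisors_iff_right.mp hfn r (by rw [mul_comm]; rw [← hn] at hm; exact hm)
  · rintro ⟨⟨a, b⟩, hab⟩
    have hab' : φf a = φg b := hab
    obtain ⟨⟨x, s⟩, ha⟩ := IsLocalization.surj (Submonoid.powers f) a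
    obtain ⟨⟨y, t⟩, hb⟩ := IsLocalization.surj (Submonoid.powers g) b
    obtain ⟨n, hn⟩ := s.2
    obtain ⟨m, hm⟩ := t.2
    have hn' : f ^ n = (s : R) := hn
    have hm' : g ^ m = (t : R) := hm
    have ha' : a * algebraMap R Rf (f ^ n) = algebraMap R Rf x := by rw [hn']; exact ha
    have hb' : b * algebraMap R Rg (g ^ m) = algebraMap R Rg y := by rw [hm']; exact hb
    have hφf' : ∀ z : R, φf (algebraMap R Rf z) = algebraMap R Rfg z := RingHom.congr_fun hφf
    have hφg' : ∀ z : R, φg (algebraMap R Rg z) = algebraMap R Rfg z := RingHom.congr_fun hφg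
    have hA : φf a * algebraMap R Rfg (f ^ n) = algebraMap R Rfg x := by
      rw [← hφf' (f ^ n), ← hφf' x, ← map_mul, ha']
    have hB : φg b * algebraMap R Rfg (g ^ m) = algebraMap R Rfg y := by
      rw [← hφg' (g ^ m), ← hφg' y, ← map_mul, hb']
    have hXY : algebraMap R Rfg (x * g ^ m) = algebraMap R Rfg (y * f ^ n) := by
      rw [map_mul, map_mul, ← hA, ← hB, hab']; ring
    obtain ⟨u, hu⟩ := (IsLocalization.eq_iff_exists (Submonoid.powers (f * g)) Rfg).mp hXY
    obtain ⟨k, hk⟩ := u.2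
    rw [← hk] at hu
    have hXYR : (x * f ^ (m + k)) * g ^ (n + m + k) = (y * g ^ (n + k)) * f ^ (n + m + k) := by
      linear_combination (f ^ m * g ^ n) * hu
    obtain ⟨r, hr1, hr2⟩ := key_decomp hreg (n + m + k) _ _ hXYR
    refine ⟨r, ?_⟩
    apply Subtype.ext
    apply Prod.ext
    · show algebraMap R Rf r = a
      have hunit : IsUnit (algebraMap R Rf (f ^ (n + m + k))) :=
        IsLocalization.map_units Rf (⟨f ^ (n + m + k), ⟨n + m + k, rfl⟩⟩ : Submonoid.powers f)
      refine hunit.mul_left_cancel ?_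
      rw [mul_comm _ (algebraMap R Rf r), mul_comm _ a, ← map_mul]
      calc algebraMap R Rf (r * f ^ (n + m + k)) = algebraMap R Rf (x * f ^ (m + k)) := by
            rw [← hr1]
        _ = a * algebraMap R Rf (f ^ (n + m + k)) := by
            rw [map_mul, ← ha', map_pow, map_pow, map_pow]; ring
    · show algebraMap R Rg r = b
      have hunit : IsUnit (algebraMap R Rg (g ^ (n + m + k))) :=
        IsLocalization.map_units Rg (⟨g ^ (n + m + k), ⟨n + m + k, rfl⟩⟩ : Submonoid.powers g)
      refine hunit.mul_left_cancel ?_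
      rw [mul_comm _ (algebraMap R Rg r), mul_comm _ b, ← map_mul]
      calc algebraMap R Rg (r * g ^ (n + m + k)) = algebraMap R Rg (y * g ^ (n + k)) := by
            rw [← hr2]
        _ = b * algebraMap R Rg (g ^ (n + m + k)) := by
            rw [map_mul, ← hb', map_pow, map_pow, map_pow]; ring
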